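/- For λ, ν set partitions of {1,...,n} with ν > λ in the order where dimv(ν) >_lex dimv(λ) (dimv is the multiset of arc lengths sorted decreasingly), the coefficient Σ_{μ ⊆ ν} χ^λ_μ (−1)^{|ν−μ|} q^{−nst(ν−μ,ν)} equals 0. -/

import Mathlib

open scoped Classical
open Finset

noncomputable section

/-- A set partition of `{1,…,n}` encoded as a set of arcs `(i,j)` with `1 ≤ i < j ≤ n`,
no two distinct arcs sharing a left endpoint or a right endpoint. -/
def IsSP (n : ℕ) (lam : Finset (ℕ × ℕ)) : Prop :=
  (∀ a ∈ lam, 1 ≤ a.1 ∧ a.1 < a.2 ∧ a.2 ≤ n) ∧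
  (∀ a ∈ lam, ∀ b ∈ lam, a ≠ b → a.1 ≠ b.1 ∧ a.2 ≠ b.2)

/-- `nstF A B = #{(i,j,k,l) : i<j<k<l, (i,l) ∈ B, (j,k) ∈ A}`. -/
def nstF (A B : Finset (ℕ × ℕ)) : ℕ :=
  ((B ×ˢ A).filter fun p => p.1.1 < p.2.1 ∧ p.2.1 < p.2.2 ∧ p.2.2 < p.1.2).card

/-- `dimF λ = Σ_{(i,l)∈λ} (l-i)`. -/
def dimF (lam : Finset (ℕ × ℕ)) : ℕ := ∑ a ∈ lam, (a.2 - a.1)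

/-- Supercharacter value `χ^λ_μ`. -/
def chiF {K : Type*} [Field K] (q : K) (lam mu : Finset (ℕ × ℕ)) : K :=
  if ∀ i j k : ℕ, i < j → j < k → (i, k) ∈ lam → (i, j) ∉ mu ∧ (j, k) ∉ mu then
    (q - 1) ^ (lam.card - (lam ∩ mu).card) * q ^ (dimF lam - lam.card) *
      (-1 : K) ^ ((lam ∩ mu).card) * (q ^ nstF mu lam)⁻¹
  else 0

/-- `(j,k)` conflicts with `λ`: some arc of `λ` shares an endpoint with it and strictly contains it. -/
def cfltP (lam : Finset (ℕ × ℕ)) (a : ℕ × ℕ) : Prop :=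
  ∃ b ∈ lam, (b.1 = a.1 ∧ a.1 < a.2 ∧ a.2 < b.2) ∨ (b.1 < a.1 ∧ a.1 < a.2 ∧ a.2 = b.2)

/-- Strictly nested pairs: inner arc of `ν` not conflicting with `λ`, nested in an arc of `λ`. -/
def snstF (nu lam : Finset (ℕ × ℕ)) : ℕ :=
  ((lam ×ˢ nu).filter fun p =>
    p.1.1 < p.2.1 ∧ p.2.1 < p.2.2 ∧ p.2.2 < p.1.2 ∧ ¬ cfltP lam p.2).card

/-- Multiset of arc lengths, sorted decreasingly. -/
def dimv (lam : Finset (ℕ × ℕ)) : List ℕ :=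
  ((lam.val.map fun a => a.2 - a.1).sort (· ≤ ·)).reverse

/-- All set partitions of `{1,…,n}` as arc sets. -/
def allSP (n : ℕ) : Finset (Finset (ℕ × ℕ)) :=
  ((Finset.Icc 1 n ×ˢ Finset.Icc 1 n).powerset).filter (IsSP n)

/-!
Since `dimv ν > dimv λ`, there is a longest arc `a` of `ν \ λ` at or above the length where the
lexicographic comparison is decided, and every arc longer than `a` lies in `λ` iff it lies in `ν`.
As `ν` is a set partition, no arc of `λ` shares an endpoint with `a` and strictly contains it, so
adding `a` to `μ` does not change whether `χ^λ_μ` vanishes; and `λ`, `ν` have the same number `k`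
of arcs nesting over `a`. Hence adding `a` to `μ` multiplies `χ^λ_μ` by `q^{-k}` and
`(-1)^{|ν - μ|} q^{-nst(ν - μ, ν)}` by `-q^k`, so the terms of `μ` and `μ ∪ {a}` cancel.
-/

def arcLen (a : ℕ × ℕ) : ℕ := a.2 - a.1

def nestCount (B : Finset (ℕ × ℕ)) (a : ℕ × ℕ) : ℕ :=
  #{b ∈ B | b.1 < a.1 ∧ a.1 < a.2 ∧ a.2 < b.2}

lemma nstF_eq_sum_nestCount (A B : Finset (ℕ × ℕ)) : nstF A B = ∑ a ∈ A, nestCount B a := by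
  rw [nstF, card_filter, sum_product, sum_comm]
  exact sum_congr rfl fun a _ => (card_filter _ _).symm

lemma nstF_insert {A : Finset (ℕ × ℕ)} (B : Finset (ℕ × ℕ)) {a : ℕ × ℕ} (ha : a ∉ A) :
    nstF (insert a A) B = nestCount B a + nstF A B := by
  rw [nstF_eq_sum_nestCount, nstF_eq_sum_nestCount, sum_insert ha]

lemma Finset.sum_powerset_eq_zero_of_add_insert {α M : Type*} [DecidableEq α] [AddCommMonoid M]
    {s : Finset α} {a : α} (f : Finset α → M) (ha : a ∈ s)
    (hf : ∀ t ⊆ s.erase a, f t + f (insert a t) = 0) : ∑ t ∈ s.powerset, f t = 0 := by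
  rw [← insert_erase ha, sum_powerset_insert (notMem_erase a s), ← sum_add_distrib]
  exact sum_eq_zero fun t ht => hf t (mem_powerset.1 ht)

lemma List.le_of_mem_of_pairwise_ge {α : Type*} [LinearOrder α] {y z : α} {t : List α}
    (h : (y :: t).Pairwise (· ≥ ·)) (hz : z ∈ y :: t) : z ≤ y := by
  rcases mem_cons.1 hz with rfl | hz
  exacts [le_rfl, rel_of_pairwise_cons h hz]

lemma List.countP_lt_eq_zero_of_pairwise_ge {α : Type*} [LinearOrder α] {y K : α}
    {t : List α} (h : (y :: t).Pairwise (· ≥ ·)) (hyK : y ≤ K) :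
    (y :: t).countP (fun x => K < x) = 0 :=
  countP_eq_zero.2 fun _ hz => by simpa using (le_of_mem_of_pairwise_ge h hz).trans hyK

lemma List.Lex.exists_countP_lt {α : Type*} [LinearOrder α] {l₁ l₂ : List α}
    (h₁ : l₁.Pairwise (· ≥ ·)) (h₂ : l₂.Pairwise (· ≥ ·)) (h : List.Lex (· < ·) l₁ l₂) :
    ∃ L, (∀ K, L ≤ K → l₁.countP (fun x => K < x) = l₂.countP (fun x => K < x)) ∧
      l₁.countP (fun x => L ≤ x) < l₂.countP (fun x => L ≤ x) := by
  induction h with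
  | nil =>
    rename_i y _
    exact ⟨y, fun K hK => (countP_lt_eq_zero_of_pairwise_ge h₂ hK).symm,
      by simp⟩
  | cons _ ih =>
    obtain ⟨L, heq, hlt⟩ := ih h₁.of_cons h₂.of_cons
    refine ⟨L, fun K hK => by rw [countP_cons, countP_cons, heq K hK], ?_⟩
    rw [countP_cons, countP_cons]
    omega
  | @rel x _ y _ hxy =>
    refine ⟨y, fun K hK => ?_, ?_⟩
    · rw [countP_lt_eq_zero_of_pairwise_ge h₁ (hxy.le.trans hK),
        countP_lt_eq_zero_of_pairwise_ge h₂ hK]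
    · rw [countP_eq_zero.2 fun z hz => by
        simpa using (le_of_mem_of_pairwise_ge h₁ hz).trans_lt hxy]
      simp

lemma dimv_pairwise_ge (X : Finset (ℕ × ℕ)) : (dimv X).Pairwise (· ≥ ·) :=
  List.pairwise_reverse.2 (Multiset.pairwise_sort _ _)

lemma countP_dimv (X : Finset (ℕ × ℕ)) (P : ℕ → Prop) [DecidablePred P] :
    (dimv X).countP (fun x => decide (P x)) = #{b ∈ X | P (arcLen b)} := by
  rw [dimv, List.countP_reverse, ← Multiset.coe_countP, Multiset.sort_eq,
    Multiset.countP_map]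
  rfl

lemma exists_card_arcLen_lt_of_lex {lam nu : Finset (ℕ × ℕ)}
    (hgt : List.Lex (· < ·) (dimv lam) (dimv nu)) :
    ∃ L, (∀ K, L ≤ K → #{b ∈ lam | K < arcLen b} = #{b ∈ nu | K < arcLen b}) ∧
      #{b ∈ lam | L ≤ arcLen b} < #{b ∈ nu | L ≤ arcLen b} := by
  obtain ⟨L, heq, hlt⟩ := hgt.exists_countP_lt (dimv_pairwise_ge lam) (dimv_pairwise_ge nu)
  refine ⟨L, fun K hK => ?_, ?_⟩
  · simpa only [countP_dimv] using heq K hK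
  · simpa only [countP_dimv] using hlt

lemma exists_mem_sdiff_agree_above_of_lex {lam nu : Finset (ℕ × ℕ)}
    (hgt : List.Lex (· < ·) (dimv lam) (dimv nu)) :
    ∃ a ∈ nu, a ∉ lam ∧ ∀ b, arcLen a < arcLen b → (b ∈ lam ↔ b ∈ nu) := by
  obtain ⟨L, heq, hlt⟩ := exists_card_arcLen_lt_of_lex hgt
  have hne : {b ∈ nu | L ≤ arcLen b ∧ b ∉ lam}.Nonempty := by
    by_contra hemp
    refine hlt.not_ge (card_le_card fun b hb => ?_)
    rw [mem_filter] at hb ⊢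
    by_contra hblam
    exact hemp ⟨b, mem_filter.2 ⟨hb.1, hb.2, fun h => hblam ⟨h, hb.2⟩⟩⟩
  obtain ⟨a, ha, hmax⟩ := exists_max_image _ arcLen hne
  obtain ⟨hanu, haL, halam⟩ := mem_filter.1 ha
  have hsub : {b ∈ nu | arcLen a < arcLen b} ⊆ {b ∈ lam | arcLen a < arcLen b} := by
    intro b hb
    obtain ⟨hbnu, hab⟩ := mem_filter.1 hb
    refine mem_filter.2 ⟨?_, hab⟩
    by_contra hblam
    exact (hmax b (mem_filter.2 ⟨hbnu, haL.trans hab.le, hblam⟩)).not_gt hab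
  have hagree := eq_of_subset_of_card_le hsub (heq _ haL).le
  refine ⟨a, hanu, halam, fun b hb => ?_⟩
  simpa [hb] using (congrArg (b ∈ ·) hagree).symm

section Toggle

variable {lam nu : Finset (ℕ × ℕ)} {a : ℕ × ℕ}

lemma not_cfltP_of_agree_above {n : ℕ} (hnu : IsSP n nu) (ha : a ∈ nu) (halam : a ∉ lam)
    (hagree : ∀ b, arcLen a < arcLen b → (b ∈ lam ↔ b ∈ nu)) : ¬ cfltP lam a := by
  rintro ⟨b, hb, hcontains⟩
  have hlen : arcLen a < arcLen b := by unfold arcLen; omega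
  have hab := hnu.2 a ha b ((hagree b hlen).1 hb) (by rintro rfl; exact halam hb)
  omega

lemma nestCount_eq_of_agree_above (hagree : ∀ b, arcLen a < arcLen b → (b ∈ lam ↔ b ∈ nu)) :
    nestCount lam a = nestCount nu a := by
  refine congrArg card (ext fun b => ?_)
  simp only [mem_filter]
  constructor <;> rintro ⟨hb, hnest⟩ <;> refine ⟨?_, hnest⟩
  · exact (hagree b (by unfold arcLen; omega)).1 hb
  · exact (hagree b (by unfold arcLen; omega)).2 hb

lemma chiF_support_insert_iff {mu : Finset (ℕ × ℕ)} (hcf : ¬ cfltP lam a) :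
    (∀ i j k : ℕ, i < j → j < k → (i, k) ∈ lam → (i, j) ∉ insert a mu ∧ (j, k) ∉ insert a mu)
      ↔ (∀ i j k : ℕ, i < j → j < k → (i, k) ∈ lam → (i, j) ∉ mu ∧ (j, k) ∉ mu) := by
  refine ⟨fun h i j k hij hjk hik => ?_, fun h i j k hij hjk hik => ?_⟩
  · obtain ⟨h₁, h₂⟩ := h i j k hij hjk hik
    exact ⟨fun hm => h₁ (mem_insert_of_mem hm), fun hm => h₂ (mem_insert_of_mem hm)⟩
  · obtain ⟨h₁, h₂⟩ := h i j k hij hjk hik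
    refine ⟨fun hm => ?_, fun hm => ?_⟩ <;> rcases mem_insert.1 hm with rfl | hm
    · exact hcf ⟨(i, k), hik, Or.inl ⟨rfl, hij, hjk⟩⟩
    · exact h₁ hm
    · exact hcf ⟨(i, k), hik, Or.inr ⟨hij, hjk, rfl⟩⟩
    · exact h₂ hm

lemma chiF_term_add_insert_eq_zero (q : ℚ) {mu : Finset (ℕ × ℕ)} (ha : a ∈ nu) (hamu : a ∉ mu)
    (halam : a ∉ lam) (hcf : ¬ cfltP lam a) (hnest : nestCount lam a = nestCount nu a) :
    chiF q lam mu * (-1 : ℚ) ^ #(nu \ mu) * (q ^ nstF (nu \ mu) nu)⁻¹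
      + chiF q lam (insert a mu) * (-1 : ℚ) ^ #(nu \ insert a mu)
        * (q ^ nstF (nu \ insert a mu) nu)⁻¹ = 0 := by
  have hrest : insert a (nu \ insert a mu) = nu \ mu := by
    rw [sdiff_insert, insert_erase (mem_sdiff.2 ⟨ha, hamu⟩)]
  have hrest_a : a ∉ nu \ insert a mu := by simp
  rw [← hrest, card_insert_of_notMem hrest_a, nstF_insert nu hrest_a]
  unfold chiF
  rw [chiF_support_insert_iff hcf, inter_insert_of_notMem halam, nstF_insert lam hamu, hnest]
  split_ifs
  · rw [pow_succ, pow_add, pow_add, mul_inv, mul_inv]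
    ring
  · ring

end Toggle

theorem stmt_7_general (n : ℕ) (q : ℚ) (lam nu : Finset (ℕ × ℕ))
    (hnu : IsSP n nu)
    (hgt : List.Lex (· < ·) (dimv lam) (dimv nu)) :
    ∑ mu ∈ nu.powerset,
      chiF q lam mu * (-1 : ℚ) ^ ((nu \ mu).card) * (q ^ nstF (nu \ mu) nu)⁻¹ = 0 := by
  obtain ⟨a, ha, halam, hagree⟩ := exists_mem_sdiff_agree_above_of_lex hgt
  refine sum_powerset_eq_zero_of_add_insert _ ha fun mu hmu => ?_
  exact chiF_term_add_insert_eq_zero q ha (fun h => notMem_erase a nu (hmu h)) halam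
    (not_cfltP_of_agree_above hnu ha halam hagree) (nestCount_eq_of_agree_above hagree)

/-- If `ν > λ` in the decreasing-lexicographic order on arc-length multisets, then the
coefficient of `ρ_ν` in `χ^λ` vanishes. -/
theorem stmt_7 (n : ℕ) (q : ℚ) (hq : 0 < q) (lam nu : Finset (ℕ × ℕ))
    (hlam : IsSP n lam) (hnu : IsSP n nu)
    (hgt : List.Lex (· < ·) (dimv lam) (dimv nu)) :
    ∑ mu ∈ nu.powerset,
      chiF q lam mu * (-1 : ℚ) ^ ((nu \ mu).card) * (q ^ nstF (nu \ mu) nu)⁻¹ = 0 :=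
  stmt_7_general n q lam nu hnu hgt
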